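/- For the two-node channel (D = 2, no relays), the half-duplex DF rate equals the full-duplex DF rate: R_DF^h = R_DF^f = Γ(λ₁₂P₁/N₂). For the three-node rSNR-degraded phase-fading channel (D = 3), the half-duplex DF rate is strictly smaller than the full-duplex DF rate: R_DF^h < R_DF^f, where R_DF^f = min{Γ(λ₁₂P₁/N₂), Γ((λ₁₃P₁+λ₂₃P₂)/N₃)} and R_DF^h = max_{α∈[0,1]} min{ αΓ(λ₁₂P₁/N₂), αΓ(λ₁₃P₁/N₃) + (1−α)Γ((λ₁₃P₁+λ₂₃P₂)/N₃) }. -/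

import Mathlib

/-!
Write `A = Γ(λ₁₂P₁/N₂)`, `B = Γ(λ₁₃P₁/N₃)`, `C = Γ((λ₁₃P₁+λ₂₃P₂)/N₃)`; rSNR-degradedness and
monotonicity of `Γ` give `B < A` and `B < C`. At `α = 1` the half-duplex rate is at most `B`.
For `α < 1` the relay term `αA` falls short of `A`, and the destination term falls short of `C`
unless `α = 0`, in which case the rate is `0 < C`.
-/

lemma min_mul_add_one_sub_mul_lt_min {α A B C : ℝ} (hα₀ : 0 ≤ α) (hα₁ : α ≤ 1)
    (hA : 0 < A) (hC : 0 < C) (hBA : B < A) (hBC : B < C) :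
    min (α * A) (α * B + (1 - α) * C) < min A C := by
  rcases hα₁.lt_or_eq with hα₁ | rfl
  · refine lt_min ((min_le_left _ _).trans_lt (by nlinarith)) ?_
    rcases hα₀.eq_or_lt with rfl | hα₀
    · simpa using hC
    · exact (min_le_right _ _).trans_lt (by nlinarith)
  · simp only [one_mul, sub_self, zero_mul, add_zero]
    exact (min_le_right _ _).trans_lt (lt_min hBA hBC)

lemma logb_one_add_pos {b x : ℝ} (hb : 1 < b) (hx : 0 < x) : 0 < Real.logb b (1 + x) :=
  Real.logb_pos hb (by linarith)

lemma logb_one_add_lt_logb_one_add {b x y : ℝ} (hb : 1 < b) (hx : -1 < x) (hxy : x < y) :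
    Real.logb b (1 + x) < Real.logb b (1 + y) :=
  Real.logb_lt_logb hb (by linarith) (by linarith)

/-- for D = 2 the half-duplex DF rate equals the full-duplex DF
rate Γ(λ₁₂P₁/N₂); for the three-node rSNR-degraded phase-fading channel the
half-duplex DF rate is strictly smaller than the full-duplex DF rate. -/
theorem stmt_19 (l12 l13 l23 P1 P2 N2 N3 : ℝ)
    (hl12 : 0 < l12) (hl13 : 0 < l13) (hl23 : 0 < l23)
    (hP1 : 0 < P1) (hP2 : 0 < P2) (hN2 : 0 < N2) (hN3 : 0 < N3)
    (Γ : ℝ → ℝ) (hΓ : Γ = fun x => Real.logb 2 (1 + x))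
    (hdeg : l13 * P1 / N3 < l12 * P1 / N2)
    (Rf2 Rh2 : ℝ) (hRf2 : Rf2 = Γ (l12 * P1 / N2))
    (hRh2 : Rh2 = Γ (l12 * P1 / N2))
    (Rf : ℝ)
    (hRf : Rf = min (Γ (l12 * P1 / N2)) (Γ ((l13 * P1 + l23 * P2) / N3)))
    (Rh : ℝ)
    (hRh : IsGreatest {v : ℝ | ∃ α : ℝ, 0 ≤ α ∧ α ≤ 1 ∧
      v = min (α * Γ (l12 * P1 / N2))
        (α * Γ (l13 * P1 / N3) + (1 - α) * Γ ((l13 * P1 + l23 * P2) / N3))} Rh) :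
    Rh2 = Rf2 ∧ Rh < Rf := by
  refine ⟨hRh2.trans hRf2.symm, ?_⟩
  obtain ⟨α, hα₀, hα₁, rfl⟩ := hRh.1
  subst hRf hΓ
  have hb : 0 < l13 * P1 / N3 := by positivity
  have hbc : l13 * P1 / N3 < (l13 * P1 + l23 * P2) / N3 := by
    gcongr
    linarith [mul_pos hl23 hP2]
  exact min_mul_add_one_sub_mul_lt_min hα₀ hα₁
    (logb_one_add_pos one_lt_two (by positivity))
    (logb_one_add_pos one_lt_two (hb.trans hbc))
    (logb_one_add_lt_logb_one_add one_lt_two (by linarith) hdeg)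
    (logb_one_add_lt_logb_one_add one_lt_two (by linarith) hbc)
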